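/- Let X be a real Banach space that is an L1-predual, and let x* be an extreme point of the closed unit ball B_{X*} of X*. Then ker(x*) is an M-ideal in X. -/

import Mathlib

/-!
An extreme point `e` of the unit ball of a normed space is fixed or killed by every L-projection
`P`: otherwise `e` is a proper convex combination of the rescalings of `P e` and `e - P e` to
norm `‖e‖`. In `L¹(μ)` multiplication by an indicator function is an L-projection, so inside the
support of an extreme point `e` every measurable set is null or conull. Hence every `g ∈ L¹(μ)` is
a multiple of `e` on the support of `e`, and multiplication by the indicator of that support is an
L-projection onto `ℝ e`. Through the isometry `X* ≃ L¹(μ)` it becomes an L-projection of `X*` onto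
`ℝ x* = (ker x*)^⊥`, which is the M-ideal property.
-/

open NormedSpace Filter Topology MeasureTheory

noncomputable section

universe u

/-- A Banach space `X` is an `L¹`-predual if its dual is isometrically isomorphic to
`L¹(μ)` for some measure space `(Ω, Σ, μ)`. -/
def IsL1Predual (X : Type*) [NormedAddCommGroup X] [NormedSpace ℝ X] : Prop :=
  ∃ (Ω : Type u) (_ : MeasurableSpace Ω) (μ : Measure Ω),
    Nonempty (StrongDual ℝ X ≃ₗᵢ[ℝ] Lp ℝ 1 μ)

/-- A closed subspace `Y` of `X` is an `M`-ideal if there is a continuous linear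
projection `P` on `X*` with range the annihilator of `Y` such that
`‖f‖ = ‖P f‖ + ‖f - P f‖` for all `f ∈ X*`. -/
def IsMIdeal {X : Type*} [NormedAddCommGroup X] [NormedSpace ℝ X]
    (Y : Submodule ℝ X) : Prop :=
  IsClosed (Y : Set X) ∧
    ∃ P : StrongDual ℝ X →L[ℝ] StrongDual ℝ X,
      (∀ f, P (P f) = P f) ∧
      Set.range P = {f : StrongDual ℝ X | ∀ y ∈ Y, f y = 0} ∧
      ∀ f : StrongDual ℝ X, ‖f‖ = ‖P f‖ + ‖f - P f‖

open scoped ENNReal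

def IsLsummand {𝕜 X : Type*} [NormedField 𝕜] [NormedAddCommGroup X] [NormedSpace 𝕜 X]
    (Y : Submodule 𝕜 X) : Prop :=
  ∃ P : X →L[𝕜] X, IsLprojection X P ∧ LinearMap.range (P : X →ₗ[𝕜] X) = Y

theorem IsLsummand.map {𝕜 E F : Type*} [NormedField 𝕜] [NormedAddCommGroup E] [NormedSpace 𝕜 E]
    [NormedAddCommGroup F] [NormedSpace 𝕜 F] {Y : Submodule 𝕜 E} (hY : IsLsummand Y)
    (T : E ≃ₗᵢ[𝕜] F) : IsLsummand (Y.map (T : E →ₗ[𝕜] F)) := by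
  obtain ⟨P, hP, rfl⟩ := hY
  refine ⟨T.toContinuousLinearEquiv.conjContinuousAlgEquiv P, ⟨hP.proj.map _, fun f => ?_⟩, ?_⟩
  · simp only [ContinuousLinearMap.smul_def, sub_apply, one_apply_eq_self,
      ContinuousLinearEquiv.conjContinuousAlgEquiv_apply_apply]
    obtain ⟨g, rfl⟩ := T.surjective f
    simpa [← map_sub] using hP.Lnorm g
  · ext y
    simp only [LinearMap.mem_range, Submodule.mem_map, ContinuousLinearMap.coe_coe,
      ContinuousLinearEquiv.conjContinuousAlgEquiv_apply_apply]
    constructor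
    · rintro ⟨z, rfl⟩
      exact ⟨_, ⟨_, rfl⟩, rfl⟩
    · rintro ⟨_, ⟨z, rfl⟩, rfl⟩
      exact ⟨T z, by simp⟩

theorem StrongDual.mem_span_singleton_iff {𝕜 E : Type*} [NormedField 𝕜] [NormedAddCommGroup E]
    [NormedSpace 𝕜 E] {x f : StrongDual 𝕜 E} :
    f ∈ 𝕜 ∙ x ↔ ∀ y ∈ LinearMap.ker (x : E →ₗ[𝕜] 𝕜), f y = 0 := by
  constructor
  · rintro h y hy
    obtain ⟨c, rfl⟩ := Submodule.mem_span_singleton.1 h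
    simp_all
  · intro h
    have := mem_span_of_iInf_ker_le_ker (ι := Unit) (L := fun _ => (x : E →ₗ[𝕜] 𝕜)) (K := f)
      (by simpa [SetLike.le_def] using h)
    rw [Set.range_const, Submodule.mem_span_singleton] at this
    obtain ⟨a, ha⟩ := this
    exact Submodule.mem_span_singleton.2 ⟨a, ContinuousLinearMap.coe_injective (by simpa using ha)⟩

theorem isMIdeal_ker_of_isLsummand_span {X : Type*} [NormedAddCommGroup X] [NormedSpace ℝ X]
    {x : StrongDual ℝ X} (hx : IsLsummand (ℝ ∙ x)) : IsMIdeal (LinearMap.ker (x : X →ₗ[ℝ] ℝ)) := by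
  obtain ⟨P, hP, hrange⟩ := hx
  refine ⟨x.isClosed_ker, P, fun f => congrArg (· f) hP.proj.eq, ?_, fun f => ?_⟩
  · ext f
    rw [Set.mem_ofPred_eq, ← StrongDual.mem_span_singleton_iff, ← hrange]
    exact Iff.rfl
  · simpa only [ContinuousLinearMap.smul_def, sub_apply, one_apply_eq_self] using hP.Lnorm f

theorem IsLprojection.apply_eq_zero_or_eq_of_mem_extremePoints {E : Type*} [NormedAddCommGroup E]
    [NormedSpace ℝ E] {P : E →L[ℝ] E} (hP : IsLprojection E P) {e : E}
    (he : e ∈ Set.extremePoints ℝ (Metric.closedBall 0 1)) : P e = 0 ∨ P e = e := by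
  by_contra! ⟨hu, hv⟩
  set u := P e
  set v := e - P e
  have hPu : P u = u := congrArg (· e) hP.proj.eq
  have hsplit : ‖e‖ = ‖u‖ + ‖v‖ := hP.Lnorm e
  have hu0 : 0 < ‖u‖ := norm_pos_iff.2 hu
  have hv0 : 0 < ‖v‖ := norm_pos_iff.2 (sub_ne_zero.2 (Ne.symm hv))
  have he0 : 0 < ‖e‖ := by linarith
  have hball : ∀ w : E, w ≠ 0 → (‖e‖ / ‖w‖) • w ∈ Metric.closedBall (0 : E) 1 := fun w hw => by
    rw [mem_closedBall_zero_iff, norm_smul, Real.norm_of_nonneg (by positivity),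
      div_mul_cancel₀ _ (norm_ne_zero_iff.2 hw)]
    exact mem_closedBall_zero_iff.1 he.1
  have hseg : e ∈ openSegment ℝ ((‖e‖ / ‖u‖) • u) ((‖e‖ / ‖v‖) • v) := by
    refine ⟨‖u‖ / ‖e‖, ‖v‖ / ‖e‖, by positivity, by positivity, by field_simp; linarith, ?_⟩
    rw [smul_smul, smul_smul, div_mul_div_cancel₀ he0.ne', div_mul_div_cancel₀ he0.ne',
      div_self hu0.ne', div_self hv0.ne', one_smul, one_smul, add_sub_cancel]
  have hue : (‖e‖ / ‖u‖) • u = e := he.2 (hball u hu) (hball v (sub_ne_zero.2 (Ne.symm hv))) hseg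
  have hPe := congrArg P hue
  rw [map_smul, hPu, hue] at hPe
  exact hv hPe.symm

namespace MeasureTheory.Lp

variable {Ω E : Type*} [MeasurableSpace Ω] {μ : Measure Ω} [NormedAddCommGroup E]
  [NormedSpace ℝ E] {p : ℝ≥0∞} {s : Set Ω}

theorem measurableSet_support (f : Lp ℝ p μ) : MeasurableSet (Function.support f) :=
  _root_.measurableSet_support (Lp.stronglyMeasurable f).measurable

variable [Fact (1 ≤ p)]

def indicatorCLM (hs : MeasurableSet s) : Lp E p μ →L[ℝ] Lp E p μ :=
  (ContinuousLinearMap.lsmul ℝ ℝ).holderL μ ∞ p p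
    ((memLp_top_const (μ := μ) (1 : ℝ)).indicator hs).toLp

theorem indicatorCLM_ae_eq (hs : MeasurableSet s) (g : Lp E p μ) :
    ⇑(indicatorCLM hs g) =ᵐ[μ] s.indicator ⇑g := by
  have hχ : MemLp (s.indicator fun _ => (1 : ℝ)) ∞ μ := (memLp_top_const 1).indicator hs
  have h2 : ⇑(hχ.toLp) =ᵐ[μ] s.indicator fun _ => (1 : ℝ) := MemLp.coeFn_toLp hχ
  have h1 : ⇑(indicatorCLM hs g) =ᵐ[μ] fun ω => hχ.toLp _ ω • g ω :=
    (ContinuousLinearMap.lsmul ℝ ℝ).coeFn_holder (r := p) _ g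
  filter_upwards [h1, h2] with ω h1 h2
  rw [h1, h2]
  by_cases hω : ω ∈ s <;> simp [hω]

theorem norm_indicatorCLM (hs : MeasurableSet s) (g : Lp E 1 μ) :
    ‖indicatorCLM hs g‖ = ∫ ω in s, ‖g ω‖ ∂μ := by
  rw [L1.norm_eq_integral_norm, ← integral_indicator hs]
  refine integral_congr_ae ?_
  filter_upwards [indicatorCLM_ae_eq hs g] with ω hω
  rw [hω, norm_indicator_eq_indicator_norm]

theorem sub_indicatorCLM (hs : MeasurableSet s) (g : Lp E p μ) :
    g - indicatorCLM hs g = indicatorCLM hs.compl g := by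
  refine Lp.ext ?_
  filter_upwards [Lp.coeFn_sub g (indicatorCLM hs g), indicatorCLM_ae_eq hs g,
    indicatorCLM_ae_eq hs.compl g] with ω h1 h2 h3
  rw [h1, Pi.sub_apply, h2, h3]
  by_cases hω : ω ∈ s <;> simp [hω]

theorem isLprojection_indicatorCLM (hs : MeasurableSet s) :
    IsLprojection (Lp E 1 μ) (indicatorCLM hs : Lp E 1 μ →L[ℝ] Lp E 1 μ) where
  proj := by
    ext1 g
    refine Lp.ext ?_
    filter_upwards [indicatorCLM_ae_eq hs (indicatorCLM hs g), indicatorCLM_ae_eq hs g]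
      with ω h1 h2
    change indicatorCLM hs (indicatorCLM hs g) ω = _
    rw [h1, h2]
    by_cases hω : ω ∈ s <;> simp [hω, h2]
  Lnorm g := by
    rw [ContinuousLinearMap.smul_def, ContinuousLinearMap.smul_def, sub_apply,
      one_apply_eq_self, sub_indicatorCLM, norm_indicatorCLM, norm_indicatorCLM,
      integral_add_compl hs (L1.integrable_coeFn g).norm, L1.norm_eq_integral_norm]

variable {e : Lp ℝ 1 μ}

theorem ae_restrict_support_mem_or_notMem
    (he : e ∈ Set.extremePoints ℝ (Metric.closedBall 0 1)) {S : Set Ω} (hS : MeasurableSet S) :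
    (∀ᵐ ω ∂μ.restrict (Function.support e), ω ∈ S) ∨
      ∀ᵐ ω ∂μ.restrict (Function.support e), ω ∉ S := by
  have hA := measurableSet_support e
  rw [ae_restrict_iff' hA, ae_restrict_iff' hA]
  rcases (isLprojection_indicatorCLM hS).apply_eq_zero_or_eq_of_mem_extremePoints
    (P := indicatorCLM hS) he with h | h
  · right
    filter_upwards [indicatorCLM_ae_eq hS e, Lp.coeFn_zero ℝ 1 μ] with ω h1 h2 hω hωS
    rw [h, h2, Set.indicator_of_mem hωS] at h1
    exact hω h1.symm
  · left
    filter_upwards [indicatorCLM_ae_eq hS e] with ω h1 hω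
    by_contra hωS
    rw [h, Set.indicator_of_notMem hωS] at h1
    exact hω h1

theorem exists_ae_eq_const_mul_on_support
    (he : e ∈ Set.extremePoints ℝ (Metric.closedBall 0 1)) (g : Lp ℝ 1 μ) :
    ∃ c : ℝ, ∀ᵐ ω ∂μ, e ω ≠ 0 → g ω = c * e ω := by
  have hA := measurableSet_support e
  have hquot : Measurable fun ω => g ω / e ω :=
    (Lp.stronglyMeasurable g).measurable.div (Lp.stronglyMeasurable e).measurable
  obtain ⟨c, hc⟩ := exists_eventuallyEq_const_of_forall_separating
    (l := ae (μ.restrict (Function.support e))) (f := fun ω => g ω / e ω) MeasurableSet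
    fun U hU => ae_restrict_support_mem_or_notMem he (hquot hU)
  rw [EventuallyEq, ae_restrict_iff' hA] at hc
  refine ⟨c, ?_⟩
  filter_upwards [hc] with ω h hω
  exact (div_eq_iff hω).1 (h hω)

theorem isLsummand_span_of_mem_extremePoints
    (he : e ∈ Set.extremePoints ℝ (Metric.closedBall 0 1)) : IsLsummand (ℝ ∙ e) := by
  have hA := measurableSet_support e
  refine ⟨indicatorCLM hA, isLprojection_indicatorCLM hA, le_antisymm ?_ ?_⟩
  · rintro _ ⟨g, rfl⟩
    obtain ⟨c, hc⟩ := exists_ae_eq_const_mul_on_support he g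
    refine Submodule.mem_span_singleton.2 ⟨c, Lp.ext ?_⟩
    filter_upwards [Lp.coeFn_smul c e, indicatorCLM_ae_eq hA g, hc] with ω h1 h2 h3
    rw [h1, ContinuousLinearMap.coe_coe, h2]
    by_cases hω : e ω = 0
    · simp [hω]
    · simp [hω, h3 hω]
  · refine (Submodule.span_singleton_le_iff_mem _ _).2 ⟨e, Lp.ext ?_⟩
    filter_upwards [indicatorCLM_ae_eq hA e] with ω h
    rw [ContinuousLinearMap.coe_coe, h, Set.indicator_support]

end MeasureTheory.Lp

theorem stmt_15_general {X : Type*} [NormedAddCommGroup X] [NormedSpace ℝ X]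
    (hX : IsL1Predual.{u} X) (x : StrongDual ℝ X)
    (hx : x ∈ Set.extremePoints ℝ (Metric.closedBall (0 : StrongDual ℝ X) 1)) :
    IsMIdeal (LinearMap.ker (x : X →ₗ[ℝ] ℝ)) := by
  obtain ⟨Ω, _, μ, ⟨T⟩⟩ := hX
  have hTx : T x ∈ Set.extremePoints ℝ (Metric.closedBall (0 : Lp ℝ 1 μ) 1) := by
    have := Set.mem_image_of_mem T hx
    rwa [image_extremePoints, T.image_closedBall, map_zero] at this
  have hL := (Lp.isLsummand_span_of_mem_extremePoints hTx).map T.symm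
  rw [Submodule.map_span, Set.image_singleton] at hL
  exact isMIdeal_ker_of_isLsummand_span (by simpa using hL)

/-- If `X` is an `L¹`-predual and `x*` is an extreme point of the
closed unit ball of `X*`, then `ker x*` is an `M`-ideal in `X`. -/
theorem stmt_15 {X : Type*} [NormedAddCommGroup X] [NormedSpace ℝ X] [CompleteSpace X]
    (hX : IsL1Predual.{u} X) (x : StrongDual ℝ X)
    (hx : x ∈ Set.extremePoints ℝ (Metric.closedBall (0 : StrongDual ℝ X) 1)) :
    IsMIdeal (LinearMap.ker (x : X →ₗ[ℝ] ℝ)) :=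
  stmt_15_general hX x hx
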